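/- Let E be a strongly connected finite directed graph with no sources, m | n, ρ = ρ(A_E) and x the Perron–Frobenius eigenvector of A_E. The vectors m_n on E^{<n} defined by m_n(μ) = (1/n)·ρ^{−|μ|}·x_{s(μ)} are compatible with the pushforwards: Σ_{τ ∈ E^{<n}, [τ]_m = μ} m_n(τ) = m_m(μ) for all μ ∈ E^{<m}. -/

import Mathlib

/-- A directed graph: vertices, edges, range and source maps. -/
structure DGraph where
  V : Type
  E : Type
  r : E → V
  s : E → V

namespace DGraph

variable {G : DGraph}

/-- A path in a directed graph: a word of composable edges together with a source vertex
(so that length-zero paths are vertices). -/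
structure Path (G : DGraph) where
  src : G.V
  edges : List G.E
  chain : List.Chain' (fun a b => G.s a = G.r b) edges
  srcEq : ∀ a ∈ edges.getLast?, G.s a = src

/-- The range of a path. -/
def Path.rng (p : G.Path) : G.V := p.edges.head?.elim p.src G.r

/-- The length of a path. -/
def Path.length (p : G.Path) : ℕ := p.edges.length

/-- The length-zero path at a vertex. -/
def Path.nil (G : DGraph) (v : G.V) : G.Path :=
  ⟨v, [], List.isChain_nil, by simp⟩

@[simp] theorem Path.length_nil (v : G.V) : (Path.nil G v).length = 0 := rfl

/-- Prepend an edge to a path. -/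
def Path.cons (e : G.E) (p : G.Path) (h : p.rng = G.s e) : G.Path where
  src := p.src
  edges := e :: p.edges
  chain := by
    unfold List.Chain'
    rw [List.isChain_cons]
    refine ⟨fun b hb => ?_, p.chain⟩
    rw [← h]
    simp [Path.rng, Option.mem_def.mp hb]
  srcEq := by
    intro a ha
    cases hp : p.edges with
    | nil =>
      rw [hp] at ha
      simp only [List.getLast?_singleton, Option.mem_def, Option.some.injEq] at ha
      subst ha
      have h0 : p.rng = p.src := by simp [Path.rng, hp]
      rw [← h, h0]
    | cons f t =>
      apply p.srcEq
      rw [hp]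
      rw [hp, List.getLast?_cons_cons] at ha
      exact ha

@[simp] theorem Path.length_cons (e : G.E) (p : G.Path) (h : p.rng = G.s e) :
    (Path.cons e p h).length = p.length + 1 := rfl

/-- Remove the first edge of a path. -/
def Path.tail (p : G.Path) : G.Path where
  src := p.src
  edges := p.edges.tail
  chain := p.chain.tail
  srcEq := by
    intro a ha
    apply p.srcEq
    cases hp : p.edges with
    | nil => rw [hp] at ha; simp at ha
    | cons f t =>
      rw [hp] at ha
      simp only [List.tail_cons] at ha
      cases t with
      | nil => simp at ha
      | cons g u => rw [List.getLast?_cons_cons]; exact ha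

@[simp] theorem Path.length_tail (p : G.Path) : p.tail.length = p.length - 1 := by
  simp [Path.tail, Path.length]

/-- The initial segment of a path consisting of its first `k` edges. -/
def Path.take (p : G.Path) (k : ℕ) : G.Path where
  src := (p.edges.drop k).head?.elim p.src G.r
  edges := p.edges.take k
  chain := p.chain.take k
  srcEq := by
    intro a ha
    have hc : List.Chain' (fun a b => G.s a = G.r b) (p.edges.take k ++ p.edges.drop k) := by
      rw [List.take_append_drop]; exact p.chain
    unfold List.Chain' at hc
    rw [List.isChain_append] at hc
    obtain ⟨-, -, hadj⟩ := hc
    cases hd : p.edges.drop k with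
    | nil =>
      have htake : p.edges.take k = p.edges := by
        have h1 := List.take_append_drop k p.edges
        rw [hd, List.append_nil] at h1
        exact h1
      simp only [List.head?_nil, Option.elim]
      exact p.srcEq a (htake ▸ ha)
    | cons f t =>
      simp only [List.head?_cons, Option.elim]
      exact hadj a ha f (by rw [hd]; simp)

/-- `[μ]_n` : the initial segment of `μ` of length `|μ| mod n`. -/
def Path.trunc (m : ℕ) (p : G.Path) : G.Path := p.take (p.length % m)

/-- Concatenation of paths, `p` followed after `q` (so `p.append q` has range the range of `p`
and source the source of `q`). -/
def Path.append (p q : G.Path) (h : p.src = q.rng) : G.Path where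
  src := q.src
  edges := p.edges ++ q.edges
  chain := by
    unfold List.Chain'
    rw [List.isChain_append]
    refine ⟨p.chain, q.chain, fun a ha b hb => ?_⟩
    rw [p.srcEq a ha, h]
    simp [Path.rng, Option.mem_def.mp hb]
  srcEq := by
    intro a ha
    cases hq : q.edges with
    | nil =>
      rw [hq, List.append_nil] at ha
      have h0 : q.rng = q.src := by simp [Path.rng, hq]
      rw [p.srcEq a ha, h, h0]
    | cons f t =>
      apply q.srcEq
      rw [hq]
      rw [hq, List.getLast?_append_cons] at ha
      exact ha

/-- A graph is row-finite if every vertex receives finitely many edges. -/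
def RowFinite (G : DGraph) : Prop := ∀ v : G.V, {e : G.E | G.r e = v}.Finite

/-- A graph has no sources if every vertex receives an edge. -/
def NoSources (G : DGraph) : Prop := ∀ v : G.V, ∃ e : G.E, G.r e = v

/-- A graph is strongly connected if for all vertices `v, w` there is a path from `w` to `v`. -/
def StronglyConnected (G : DGraph) : Prop :=
  ∀ v w : G.V, ∃ p : G.Path, p.src = w ∧ p.rng = v

/-- The set of paths of length less than `n`. -/
abbrev PathLt (G : DGraph) (n : ℕ) := {p : G.Path // p.length < n}

/-- The graph `E(n)` of Kribs and Solel: vertices are paths of length `< n`, and edges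
are pairs `(e, μ)` with `r(μ) = s(e)` and `|μ| < n`, with source `μ` and range `[eμ]_n`. -/
def Eln (G : DGraph) (n : ℕ) : DGraph where
  V := PathLt G n
  E := {q : G.E × G.Path // q.2.length + 1 ≤ n ∧ q.2.rng = G.s q.1}
  s := fun q => ⟨q.1.2, Nat.lt_of_succ_le q.2.1⟩
  r := fun q =>
    if h : q.1.2.length + 1 < n then
      ⟨Path.cons q.1.1 q.1.2 q.2.2, by simpa using h⟩
    else
      ⟨Path.nil G (G.r q.1.1), Nat.lt_of_lt_of_le (Nat.succ_pos _) q.2.1⟩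

/-- A vertex of `E`, regarded as a length-zero vertex of `E(n)`. -/
def vtx (G : DGraph) (n : ℕ) (hn : 0 < n) (v : G.V) : PathLt G n :=
  ⟨Path.nil G v, by simpa using hn⟩

/-- `d` is the greatest common divisor of the set `S` of natural numbers. -/
def IsGCDOf (d : ℕ) (S : Set ℕ) : Prop :=
  (∀ k ∈ S, d ∣ k) ∧ ∀ c : ℕ, (∀ k ∈ S, c ∣ k) → c ∣ d

/-- The set of lengths of (nonempty) cycles of `G`. -/
def CycleLengths (G : DGraph) : Set ℕ :=
  {k | ∃ p : G.Path, p.rng = p.src ∧ p.edges ≠ [] ∧ p.length = k}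

/-- The set of lengths of (nonempty) cycles of `G` based at `v`. -/
def CycleLengthsAt (G : DGraph) (v : G.V) : Set ℕ :=
  {k | ∃ p : G.Path, p.src = v ∧ p.rng = v ∧ p.edges ≠ [] ∧ p.length = k}

/-- The relation `v ∼ w` iff there is a path from `w` to `v` whose length is divisible by `d`. -/
def SimRel (G : DGraph) (d : ℕ) (v w : G.V) : Prop :=
  ∃ p : G.Path, p.src = w ∧ p.rng = v ∧ d ∣ p.length

/-- The connected-component relation of a graph: the smallest equivalence relation
identifying the range and the source of each edge. -/
def Comp (G : DGraph) : G.V → G.V → Prop :=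
  Relation.EqvGen (fun a b => ∃ f : G.E, G.r f = a ∧ G.s f = b)

/-- The adjacency matrix of `E(n)` acting on vectors indexed by `E^{<n}`. -/
noncomputable def Aact (G : DGraph) (n : ℕ) (g : PathLt G n → ℝ) (v : PathLt G n) : ℝ :=
  ∑ᶠ (f : (Eln G n).E) (_ : (Eln G n).r f = v), g ((Eln G n).s f)

/-- The pushforward of a vector on `E^{<n}` along `ν ↦ [ν]_m`. -/
noncomputable def pushf (G : DGraph) (n m : ℕ) (g : PathLt G n → ℝ) (μ : PathLt G m) : ℝ :=
  ∑ᶠ (ν : PathLt G n) (_ : Path.trunc m ν.1 = μ.1), g ν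

instance : TopologicalSpace G.Path := ⊥

/-- The inverse limit `lim← E^{<n_k}` along the truncation maps. -/
def InvLim (G : DGraph) (n : ℕ → ℕ) : Type :=
  {f : (k : ℕ) → PathLt G (n k) // ∀ k, Path.trunc (n k) (f (k+1)).1 = (f k).1}

instance (G : DGraph) (n : ℕ → ℕ) : TopologicalSpace (InvLim G n) :=
  inferInstanceAs (TopologicalSpace
    {f : (k : ℕ) → PathLt G (n k) // ∀ k, Path.trunc (n k) (f (k+1)).1 = (f k).1})

noncomputable instance (G : DGraph) (n : ℕ → ℕ) : MeasurableSpace (InvLim G n) := borel _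

end DGraph

/-! Cutting off the prefix `μ` identifies the paths `τ ∈ E^{<n}` with `[τ]_m = μ` with the paths
into `s(μ)` of the lengths `0, m, …, n - m`. Iterating the eigenvector equation gives
`Σ_{|q| = L, r(q) = v} x_{s(q)} = ρ^L x_v`, so each of these `n / m` lengths contributes
`(1/n) ρ^{-|μ|} x_{s(μ)}` to the sum. -/

namespace DGraph

variable {G : DGraph}

namespace Path

theorem ext_of_src {p q : G.Path} (hs : p.src = q.src) (he : p.edges = q.edges) : p = q := by
  cases p; cases q; simp_all

theorem rng_eq_src_of_edges_eq_nil {p : G.Path} (h : p.edges = []) : p.rng = p.src := by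
  simp [rng, h]

theorem rng_eq_of_head?_eq {p : G.Path} {e : G.E} (h : p.edges.head? = some e) :
    p.rng = G.r e := by
  simp [rng, h]

theorem ext_of_rng {p q : G.Path} (hr : p.rng = q.rng) (he : p.edges = q.edges) : p = q := by
  refine ext_of_src ?_ he
  cases h : p.edges.getLast? with
  | none =>
    have hp : p.edges = [] := List.getLast?_eq_none_iff.mp h
    rwa [rng_eq_src_of_edges_eq_nil hp, rng_eq_src_of_edges_eq_nil (he ▸ hp)] at hr
  | some a => rw [← p.srcEq a h, q.srcEq a (he ▸ h)]

@[simp] theorem src_tail (p : G.Path) : p.tail.src = p.src := rfl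

theorem rng_tail_of_head?_eq {p : G.Path} {e : G.E} (h : p.edges.head? = some e) :
    p.tail.rng = G.s e := by
  obtain ⟨src, edges, chain, srcEq⟩ := p
  obtain ⟨rest, rfl⟩ : ∃ rest, edges = e :: rest := List.head?_eq_some_iff.mp h
  cases rest with
  | nil => exact (srcEq e rfl).symm
  | cons f rest => exact (List.isChain_cons_cons.mp chain).1.symm

def drop (p : G.Path) (k : ℕ) : G.Path where
  src := p.src
  edges := p.edges.drop k
  chain := p.chain.drop k
  srcEq a ha := p.srcEq a <| by
    rw [List.getLast?_drop] at ha
    split_ifs at ha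
    · simp at ha
    · exact ha

@[simp] theorem src_drop (p : G.Path) (k : ℕ) : (p.drop k).src = p.src := rfl

@[simp] theorem length_drop (p : G.Path) (k : ℕ) : (p.drop k).length = p.length - k :=
  List.length_drop

theorem src_take (p : G.Path) (k : ℕ) : (p.take k).src = (p.drop k).rng := rfl

theorem length_take (p : G.Path) (k : ℕ) : (p.take k).length = min k p.length :=
  List.length_take

theorem length_take_add_length_drop (p : G.Path) (k : ℕ) :
    (p.take k).length + (p.drop k).length = p.length := by
  rw [length_take, length_drop]
  omega

theorem eq_of_take_eq_of_drop_eq {p q : G.Path} {k : ℕ} (ht : p.take k = q.take k)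
    (hd : p.drop k = q.drop k) : p = q := by
  refine ext_of_src (by simpa using congrArg src hd) ?_
  rw [← List.take_append_drop k p.edges, ← List.take_append_drop k q.edges]
  exact congrArg₂ (· ++ ·) (congrArg edges ht) (congrArg edges hd)

@[simp] theorem src_append (p q : G.Path) (h : p.src = q.rng) : (p.append q h).src = q.src :=
  rfl

@[simp] theorem edges_append (p q : G.Path) (h : p.src = q.rng) :
    (p.append q h).edges = p.edges ++ q.edges :=
  rfl

@[simp] theorem length_append (p q : G.Path) (h : p.src = q.rng) :
    (p.append q h).length = p.length + q.length :=
  List.length_append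

theorem take_append (p q : G.Path) (h : p.src = q.rng) : (p.append q h).take p.length = p :=
  ext_of_src (by simp [take, length, h, rng]) List.take_left

theorem drop_append (p q : G.Path) (h : p.src = q.rng) : (p.append q h).drop p.length = q :=
  ext_of_src rfl List.drop_left

theorem length_trunc (m : ℕ) (p : G.Path) : (p.trunc m).length = p.length % m := by
  rw [trunc, length_take, min_eq_left (Nat.mod_le _ _)]

theorem take_eq_of_trunc_eq {m : ℕ} {p μ : G.Path} (h : p.trunc m = μ) : p.take μ.length = μ := by
  subst h
  rw [length_trunc]
  rfl

end Path

def pathsTo (v : G.V) (L : ℕ) : Set G.Path := {p | p.rng = v ∧ p.length = L}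

theorem finite_pathsTo [Finite G.E] (v : G.V) (L : ℕ) : (pathsTo v L).Finite := by
  refine Set.Finite.of_finite_image ((List.finite_length_eq G.E L).subset ?_)
    fun p hp q hq he => Path.ext_of_rng (hp.1.trans hq.1.symm) he
  rintro _ ⟨p, hp, rfl⟩
  exact hp.2

theorem pathsTo_zero (v : G.V) : pathsTo v 0 = {Path.nil G v} := by
  ext p
  refine ⟨fun ⟨hr, hl⟩ => ?_, fun hp => hp ▸ ⟨rfl, rfl⟩⟩
  have he : p.edges = [] := List.length_eq_zero_iff.mp hl
  exact Path.ext_of_src ((Path.rng_eq_src_of_edges_eq_nil he).symm.trans hr) he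

theorem pathsTo_succ (v : G.V) (L : ℕ) :
    pathsTo v (L + 1) =
      ⋃ e ∈ {e : G.E | G.r e = v}, {p : G.Path | p.edges.head? = some e ∧ p.length = L + 1} := by
  ext p
  simp only [pathsTo, Set.mem_ofPred_eq, Set.mem_iUnion, exists_prop]
  constructor
  · rintro ⟨hr, hl⟩
    obtain ⟨e, rest, he⟩ := List.exists_cons_of_length_eq_add_one hl
    have hhead : p.edges.head? = some e := by rw [he]; rfl
    exact ⟨e, (Path.rng_eq_of_head?_eq hhead).symm.trans hr, hhead, hl⟩
  · rintro ⟨e, rfl, hhead, hl⟩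
    exact ⟨Path.rng_eq_of_head?_eq hhead, hl⟩

theorem bijOn_tail (e : G.E) (L : ℕ) :
    Set.BijOn Path.tail {p : G.Path | p.edges.head? = some e ∧ p.length = L + 1}
      (pathsTo (G.s e) L) := by
  refine ⟨fun p ⟨hh, hl⟩ => ⟨Path.rng_tail_of_head?_eq hh, ?_⟩, fun p ⟨hp, _⟩ q ⟨hq, _⟩ hpq => ?_,
    fun q ⟨hq, hl⟩ => ⟨Path.cons e q hq, ⟨rfl, by simp [hl]⟩, rfl⟩⟩
  · simp [hl]
  · refine Path.ext_of_src (by simpa using congrArg Path.src hpq) ?_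
    rw [← List.cons_head?_tail hp, ← List.cons_head?_tail hq]
    exact congrArg _ (congrArg Path.edges hpq)

theorem pairwiseDisjoint_pathsTo {ι : Type*} (v : G.V) {s : Set ι} {f : ι → ℕ}
    (hf : Set.InjOn f s) : s.PairwiseDisjoint fun i => pathsTo v (f i) :=
  fun _ hi _ hi' hne => Set.disjoint_left.mpr fun _ hp hp' =>
    hne (hf hi hi' (hp.2.symm.trans hp'.2))

section Eigenvector

variable [Finite G.E] {R : Type*} {ρ : R} {x : G.V → R}

theorem finsum_src_pathsTo [CommSemiring R]
    (heig : ∀ v, ∑ᶠ (e : G.E) (_ : G.r e = v), x (G.s e) = ρ * x v) (L : ℕ) (v : G.V) :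
    ∑ᶠ p ∈ pathsTo v L, x p.src = ρ ^ L * x v := by
  induction L generalizing v with
  | zero => simp [pathsTo_zero, Path.nil]
  | succ L ih =>
    have hdisj : Set.PairwiseDisjoint {e : G.E | G.r e = v}
        fun e => {p : G.Path | p.edges.head? = some e ∧ p.length = L + 1} :=
      fun e _ e' _ hne => Set.disjoint_left.mpr fun p hp hp' =>
        hne (Option.some_injective _ (hp.1.symm.trans hp'.1))
    calc ∑ᶠ p ∈ pathsTo v (L + 1), x p.src
        = ∑ᶠ e ∈ {e : G.E | G.r e = v},
            ∑ᶠ p ∈ {p : G.Path | p.edges.head? = some e ∧ p.length = L + 1}, x p.src := by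
          rw [pathsTo_succ, finsum_mem_biUnion hdisj (Set.toFinite _)]
          exact fun e _ => (finite_pathsTo (G.r e) (L + 1)).subset
            fun p hp => ⟨Path.rng_eq_of_head?_eq hp.1, hp.2⟩
      _ = ∑ᶠ e ∈ {e : G.E | G.r e = v}, ρ ^ L * x (G.s e) :=
          finsum_mem_congr rfl fun e _ =>
            (finsum_mem_eq_of_bijOn _ (bijOn_tail e L) fun _ _ => rfl).trans (ih _)
      _ = ρ ^ (L + 1) * x v := by
          rw [← mul_finsum_mem' _ _ (Set.toFinite _), pow_succ, mul_assoc]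
          exact congrArg _ (heig v)

theorem finsum_zpow_neg_length_mul_src_pathsTo [Semifield R] (hρ : ρ ≠ 0)
    (heig : ∀ v, ∑ᶠ (e : G.E) (_ : G.r e = v), x (G.s e) = ρ * x v) (L : ℕ) (v : G.V) :
    ∑ᶠ p ∈ pathsTo v L, ρ ^ (-(p.length : ℤ)) * x p.src = x v := by
  rw [finsum_mem_congr rfl fun p (hp : p ∈ pathsTo v L) => by rw [hp.2],
    ← mul_finsum_mem, finsum_src_pathsTo heig, ← mul_assoc, zpow_neg, zpow_natCast,
    inv_mul_cancel₀ (pow_ne_zero _ hρ), one_mul]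

end Eigenvector

theorem bijOn_drop_trunc {m n : ℕ} (hdvd : m ∣ n) {μ : G.Path} (hμ : μ.length < m) :
    Set.BijOn (fun τ : PathLt G n => τ.1.drop μ.length) {τ | τ.1.trunc m = μ}
      (⋃ j ∈ Finset.range (n / m), pathsTo μ.src (j * m)) := by
  have hlen : ∀ τ : PathLt G n, τ.1.trunc m = μ → τ.1.length = μ.length + τ.1.length / m * m :=
    fun τ hτ => by rw [← hτ, Path.length_trunc, Nat.mod_add_div']
  refine ⟨fun τ hτ => ?_, fun τ hτ τ' hτ' hd => ?_, fun q hq => ?_⟩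
  · refine Set.mem_biUnion (Finset.mem_coe.mpr
      (Finset.mem_range.mpr (Nat.div_lt_div_of_lt_of_dvd hdvd τ.2))) ⟨?_, ?_⟩
    · rw [← Path.src_take, Path.take_eq_of_trunc_eq hτ]
    · simp only [Path.length_drop]
      have := hlen τ hτ
      omega
  · exact Subtype.ext (Path.eq_of_take_eq_of_drop_eq
      ((Path.take_eq_of_trunc_eq hτ).trans (Path.take_eq_of_trunc_eq hτ').symm) hd)
  · obtain ⟨j, hj_mem, hrng, hq_len⟩ := Set.mem_iUnion₂.mp hq
    have hj : j < n / m := Finset.mem_range.mp hj_mem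
    let τ := μ.append q hrng.symm
    have hτn : τ.length < n :=
      calc τ.length = μ.length + j * m := by rw [Path.length_append, hq_len]
        _ < (j + 1) * m := by linarith
        _ ≤ n / m * m := Nat.mul_le_mul_right _ hj
        _ = n := Nat.div_mul_cancel hdvd
    refine ⟨⟨τ, hτn⟩, ?_, Path.drop_append μ q hrng.symm⟩
    show τ.take (τ.length % m) = μ
    rw [Path.length_append, hq_len, Nat.add_mul_mod_self_right, Nat.mod_eq_of_lt hμ,
      Path.take_append]

end DGraph

open DGraph in
theorem perron_vectors_compatible_general (G : DGraph) [Finite G.E]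
    (m n : ℕ) (hn : 0 < n) (hdvd : m ∣ n)
    (ρ : ℝ) (hρ : 0 < ρ) (x : G.V → ℝ)
    (heig : ∀ v, ∑ᶠ (e : G.E) (_ : G.r e = v), x (G.s e) = ρ * x v) :
    ∀ μ : PathLt G m,
      (∑ᶠ (τ : PathLt G n) (_ : Path.trunc m τ.1 = μ.1),
        (1 / (n : ℝ)) * ρ ^ (-(τ.1.length : ℤ)) * x τ.1.src)
      = (1 / (m : ℝ)) * ρ ^ (-(μ.1.length : ℤ)) * x μ.1.src := by
  intro μ
  have hm : 0 < m := Nat.zero_lt_of_lt μ.2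
  set c : ℝ := 1 / (n : ℝ) * ρ ^ (-(μ.1.length : ℤ))
  calc _ = ∑ᶠ q ∈ ⋃ j ∈ Finset.range (n / m), pathsTo μ.1.src (j * m),
        c * (ρ ^ (-(q.length : ℤ)) * x q.src) := by
        refine finsum_mem_eq_of_bijOn _ (bijOn_drop_trunc hdvd μ.2) fun τ hτ => ?_
        rw [← τ.1.length_take_add_length_drop, Path.take_eq_of_trunc_eq hτ, Nat.cast_add,
          neg_add, zpow_add₀ hρ.ne']
        simp only [c, Path.src_drop]
        ring
    _ = ∑ j ∈ Finset.range (n / m), c * x μ.1.src := by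
        rw [← Finset.set_biUnion_coe,
          finsum_mem_biUnion (pairwiseDisjoint_pathsTo _ (mul_left_injective₀ hm.ne').injOn)
            (Finset.finite_toSet _) fun j _ => finite_pathsTo _ _,
          finsum_mem_coe_finset]
        refine Finset.sum_congr rfl fun j _ => ?_
        rw [← mul_finsum_mem, finsum_zpow_neg_length_mul_src_pathsTo hρ.ne' heig]
    _ = _ := by
        obtain ⟨k, rfl⟩ := hdvd
        have hk : (k : ℝ) ≠ 0 := by exact_mod_cast (Nat.pos_of_mul_pos_left hn).ne'
        rw [Finset.sum_const, Finset.card_range, Nat.mul_div_cancel_left k hm, nsmul_eq_mul]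
        simp only [c]
        push_cast
        field_simp

open DGraph in
/-- Let `E` be a strongly connected finite directed graph with no sources,
`m ∣ n`, `ρ = ρ(A_E)` and `x` the Perron–Frobenius eigenvector of `A_E`.  The vectors
`m_n(μ) = (1/n)·ρ^{−|μ|}·x_{s(μ)}` on `E^{<n}` are compatible with the pushforwards:
`Σ_{τ ∈ E^{<n}, [τ]_m = μ} m_n(τ) = m_m(μ)` for all `μ ∈ E^{<m}`. -/
theorem perron_vectors_compatible (G : DGraph) [Finite G.V] [Finite G.E]
    (hsc : StronglyConnected G) (hns : NoSources G)
    (m n : ℕ) (hm : 0 < m) (hn : 0 < n) (hdvd : m ∣ n)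
    (ρ : ℝ) (hρ : 0 < ρ) (x : G.V → ℝ) (hx : ∀ v, 0 < x v)
    (heig : ∀ v, ∑ᶠ (e : G.E) (_ : G.r e = v), x (G.s e) = ρ * x v) :
    ∀ μ : PathLt G m,
      (∑ᶠ (τ : PathLt G n) (_ : Path.trunc m τ.1 = μ.1),
        (1 / (n : ℝ)) * ρ ^ (-(τ.1.length : ℤ)) * x τ.1.src)
      = (1 / (m : ℝ)) * ρ ^ (-(μ.1.length : ℤ)) * x μ.1.src :=
  perron_vectors_compatible_general G m n hn hdvd ρ hρ x heig
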